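/- Let $\bar\omega : \Delta^2(I) \to \mathbb{R}_{\geq 0}$ be a control function on a compact interval $I = [a,b]$, continuous in $(s,t)$, with $\bar\omega_{t,t} = 0$. Fix $\gamma > 0$ and define the greedy sequence $\tau_0 = a$, $\tau_{i+1} = \inf\{t > \tau_i : \bar\omega_{\tau_i, t} = \gamma^p\} \wedge b$, and let $N := \sup\{i : \tau_i < b\} + 1$ be the number of intervals. Then $N \leq 1 + \gamma^{-p} \bar\omega_{a,b}$. -/

import Mathlib

/-! Superadditivity telescopes along the greedy times: the `N - 1` full subintervals each carry
`γ ^ p` of the control, so together they carry `(N - 1) γ ^ p ≤ ω(a, b)`. -/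

open Finset

section Superadditive

variable {α : Type*} [Preorder α] {ω : α → α → ℝ} {a b : α}

theorem mono_right_of_superadditive
    (hnonneg : ∀ s t, a ≤ s → s ≤ t → t ≤ b → 0 ≤ ω s t)
    (hsuper : ∀ s u t, a ≤ s → s ≤ u → u ≤ t → t ≤ b → ω s u + ω u t ≤ ω s t)
    {s t t' : α} (has : a ≤ s) (hst : s ≤ t) (htt' : t ≤ t') (ht'b : t' ≤ b) :
    ω s t ≤ ω s t' := by
  linarith [hsuper s t t' has hst htt' ht'b, hnonneg t t' (has.trans hst) htt' ht'b]

theorem sum_le_of_superadditive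
    (hnonneg : ∀ s t, a ≤ s → s ≤ t → t ≤ b → 0 ≤ ω s t)
    (hsuper : ∀ s u t, a ≤ s → s ≤ u → u ≤ t → t ≤ b → ω s u + ω u t ≤ ω s t)
    {τ : ℕ → α} (hτmono : Monotone τ) (hτmem : ∀ i, τ i ∈ Set.Icc a b) (n : ℕ) :
    ∑ i ∈ range n, ω (τ i) (τ (i + 1)) ≤ ω (τ 0) (τ n) := by
  induction n with
  | zero => simpa using hnonneg _ _ (hτmem 0).1 le_rfl (hτmem 0).2
  | succ n ih =>
    rw [sum_range_succ]
    linarith [hsuper (τ 0) (τ n) (τ (n + 1)) (hτmem 0).1 (hτmono (Nat.zero_le n))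
      (hτmono n.le_succ) (hτmem (n + 1)).2]

end Superadditive

theorem greedy_times_bound_general (a b : ℝ)
    (ω : ℝ → ℝ → ℝ)
    (hω_nonneg : ∀ s t, a ≤ s → s ≤ t → t ≤ b → 0 ≤ ω s t)
    (hω_super : ∀ s u t, a ≤ s → s ≤ u → u ≤ t → t ≤ b → ω s u + ω u t ≤ ω s t)
    (γ p : ℝ) (hγ : 0 < γ)
    (τ : ℕ → ℝ) (N : ℕ)
    (hτ0 : τ 0 = a) (hτmono : Monotone τ) (hτmem : ∀ i, τ i ∈ Set.Icc a b)
    (hfull : ∀ i : ℕ, i + 1 < N → ω (τ i) (τ (i + 1)) = γ ^ p) :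
    (N : ℝ) ≤ 1 + γ ^ (-p) * ω a b := by
  have hab : a ≤ b := (hτmem 0).1.trans (hτmem 0).2
  obtain _ | n := N
  · have := mul_nonneg (Real.rpow_nonneg hγ.le (-p)) (hω_nonneg a b le_rfl hab le_rfl)
    push_cast
    linarith
  have hfull_sum : (n : ℝ) * γ ^ p ≤ ω a b :=
    calc (n : ℝ) * γ ^ p = ∑ i ∈ range n, ω (τ i) (τ (i + 1)) := by
          rw [sum_congr rfl fun i hi => hfull i (by simpa using mem_range.mp hi), sum_const,
            card_range, nsmul_eq_mul]
      _ ≤ ω (τ 0) (τ n) := sum_le_of_superadditive hω_nonneg hω_super hτmono hτmem n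
      _ ≤ ω a b := by
          rw [hτ0]
          exact mono_right_of_superadditive hω_nonneg hω_super le_rfl (hτmem n).1
            (hτmem n).2 le_rfl
  rw [Real.rpow_neg hγ.le, Nat.cast_succ, add_comm, ← div_eq_inv_mul]
  gcongr
  rwa [le_div_iff₀ (Real.rpow_pos_of_pos hγ p)]

/-- Bound on the number of greedy stopping times of a control: if each full
subinterval of the greedy sequence exhausts `γ^p` worth of the control, then
superadditivity forces `N ≤ 1 + γ^{-p} ω(a,b)`. -/
theorem greedy_times_bound (a b : ℝ) (hab : a ≤ b)
    (ω : ℝ → ℝ → ℝ)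
    (hω_nonneg : ∀ s t, a ≤ s → s ≤ t → t ≤ b → 0 ≤ ω s t)
    (hω_diag : ∀ t, a ≤ t → t ≤ b → ω t t = 0)
    (hω_super : ∀ s u t, a ≤ s → s ≤ u → u ≤ t → t ≤ b → ω s u + ω u t ≤ ω s t)
    (γ p : ℝ) (hγ : 0 < γ) (hp : 1 ≤ p)
    (τ : ℕ → ℝ) (N : ℕ)
    (hτ0 : τ 0 = a) (hτmono : Monotone τ) (hτmem : ∀ i, τ i ∈ Set.Icc a b)
    (hfull : ∀ i : ℕ, i + 1 < N → ω (τ i) (τ (i + 1)) = γ ^ p) :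
    (N : ℝ) ≤ 1 + γ ^ (-p) * ω a b :=
  greedy_times_bound_general a b ω hω_nonneg hω_super γ p hγ τ N hτ0 hτmono hτmem hfull
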